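/- Let $p$ and $q$ be positive integers with $p \geq 141$ (so that $(p/27)^2 \geq 27$) and $q \leq 2^{\frac{53p}{27 \log(p/27)}}$. Then $R(K_p, K_{p,q}) \leq R(K_p, K_p + qK_1) \leq 2^{\frac{250}{27} p}$. -/

import Mathlib

/-- `G` occurs as a (not necessarily induced) subgraph copy of `H`. -/
def IsCopyIn {α β : Type*} (G : SimpleGraph α) (H : SimpleGraph β) : Prop :=
  ∃ f : α ↪ β, ∀ ⦃a b : α⦄, G.Adj a b → H.Adj (f a) (f b)

/-- `N` has the Ramsey property for the pair `(G₁, G₂)`: every blue-red edge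
coloring of `K_N` (encoded by its graph of blue edges) contains a blue copy of `G₁`
or a red copy of `G₂`. -/
def RamseyProp {α β : Type*} (G₁ : SimpleGraph α) (G₂ : SimpleGraph β) (N : ℕ) : Prop :=
  ∀ blue : SimpleGraph (Fin N), IsCopyIn G₁ blue ∨ IsCopyIn G₂ blueᶜ

/-- The Ramsey number `R(G₁, G₂)`: the smallest positive integer `N` with the
Ramsey property. -/
noncomputable def ramsey {α β : Type*} (G₁ : SimpleGraph α) (G₂ : SimpleGraph β) : ℕ :=
  sInf {N : ℕ | 0 < N ∧ RamseyProp G₁ G₂ N}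

/-- The join `G + H` of two graphs. -/
def SimpleGraph.join {α β : Type*} (G : SimpleGraph α) (H : SimpleGraph β) :
    SimpleGraph (α ⊕ β) where
  Adj x y :=
    match x, y with
    | Sum.inl a, Sum.inl b => G.Adj a b
    | Sum.inr a, Sum.inr b => H.Adj a b
    | Sum.inl _, Sum.inr _ => True
    | Sum.inr _, Sum.inl _ => True
  symm := by
    constructor
    rintro (a | a) (b | b) h
    · exact G.adj_symm h
    · trivial
    · trivial
    · exact H.adj_symm h
  loopless := by
    constructor
    rintro (a | a) h
    · exact G.loopless.irrefl a h
    · exact H.loopless.irrefl a h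

open Finset in
/-- Key Erdős–Szekeres style lemma: a large set contains a blue clique of size `a`,
or a red clique of size `b` together with `q` further vertices all red-joined to it. -/
lemma key_lemma {V : Type*} [DecidableEq V] (G : SimpleGraph V) (q : ℕ) :
    ∀ n a b, a + b = n → ∀ S : Finset V, 2 ^ (a + b) * (q + 1) ≤ S.card + 1 →
      (∃ T ⊆ S, T.card = a ∧ ∀ x ∈ T, ∀ y ∈ T, x ≠ y → G.Adj x y) ∨
      (∃ T : Finset V, ∃ W : Finset V, T ⊆ S ∧ W ⊆ S ∧ Disjoint T W ∧ T.card = b ∧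
        q ≤ W.card ∧ (∀ x ∈ T, ∀ y ∈ T, x ≠ y → ¬ G.Adj x y) ∧
        (∀ x ∈ T, ∀ y ∈ W, ¬ G.Adj x y)) := by
  classical
  intro n
  induction n with
  | zero =>
    intro a b hab S _
    have ha : a = 0 := by omega
    exact Or.inl ⟨∅, empty_subset _, by simp [ha], by simp⟩
  | succ n ih =>
    intro a b hab S hS
    rcases Nat.eq_zero_or_pos a with ha | ha
    · exact Or.inl ⟨∅, empty_subset _, by simp [ha], by simp⟩
    rcases Nat.eq_zero_or_pos b with hb | hb
    · refine Or.inr ⟨∅, S, empty_subset _, Finset.Subset.refl _, Finset.disjoint_empty_left _,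
        by simp [hb], ?_, by simp, by simp⟩
      have : q + 1 ≤ 2 ^ (a + b) * (q + 1) :=
        Nat.le_mul_of_pos_left _ (Nat.two_pow_pos _)
      omega
    -- main case : a ≥ 1 and b ≥ 1
    have hsplit : 2 ^ (a + b) * (q + 1) = 2 * (2 ^ n * (q + 1)) := by
      rw [hab, pow_succ]; ring
    have hScard : 2 * (2 ^ n * (q + 1)) ≤ S.card + 1 := by omega
    have h1 : 0 < 2 ^ n * (q + 1) := by positivity
    have hSne : S.Nonempty := by
      rw [← Finset.card_pos]
      omega
    obtain ⟨v, hv⟩ := hSne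
    set B := (S.erase v).filter (fun w => G.Adj v w) with hB
    set R := (S.erase v).filter (fun w => ¬ G.Adj v w) with hR
    have hBsub : B ⊆ S := (Finset.filter_subset _ _).trans (Finset.erase_subset _ _)
    have hRsub : R ⊆ S := (Finset.filter_subset _ _).trans (Finset.erase_subset _ _)
    have hBR : B.card + R.card = S.card - 1 := by
      rw [hB, hR, Finset.card_filter_add_card_filter_not,
        Finset.card_erase_of_mem hv]
    have hcases : 2 ^ n * (q + 1) ≤ B.card + 1 ∨ 2 ^ n * (q + 1) ≤ R.card + 1 := by
      by_contra h
      push_neg at h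
      have hS1 : 1 ≤ S.card := Finset.card_pos.mpr ⟨v, hv⟩
      omega
    rcases hcases with hBc | hRc
    · -- recurse in the blue neighborhood
      have := ih (a - 1) b (by omega) B (by
        have h : (a - 1) + b = n := by omega
        rw [h]; exact hBc)
      rcases this with ⟨T, hTB, hTcard, hTclq⟩ | ⟨T, W, hTB, hWB, hdisj, hTcard, hWcard, hTred, hTW⟩
      · -- blue clique of size a-1: add v
        have hvT : v ∉ T := fun h => (Finset.notMem_erase v S)
          ((Finset.filter_subset _ _) (hTB h))
        refine Or.inl ⟨insert v T, ?_, ?_, ?_⟩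
        · exact Finset.insert_subset hv (hTB.trans hBsub)
        · rw [Finset.card_insert_of_notMem hvT, hTcard]; omega
        · intro x hx y hy hxy
          rcases Finset.mem_insert.mp hx with hx' | hx'
          · subst hx'
            rcases Finset.mem_insert.mp hy with hy' | hy'
            · exact absurd hy'.symm hxy
            · exact (Finset.mem_filter.mp (hTB hy')).2
          · rcases Finset.mem_insert.mp hy with hy' | hy'
            · subst hy'
              exact ((Finset.mem_filter.mp (hTB hx')).2).symm
            · exact hTclq x hx' y hy' hxy
      · exact Or.inr ⟨T, W, hTB.trans hBsub, hWB.trans hBsub, hdisj, hTcard, hWcard, hTred, hTW⟩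
    · -- recurse in the red neighborhood
      have := ih a (b - 1) (by omega) R (by
        have h : a + (b - 1) = n := by omega
        rw [h]; exact hRc)
      rcases this with ⟨T, hTR, hTcard, hTclq⟩ | ⟨T, W, hTR, hWR, hdisj, hTcard, hWcard, hTred, hTW⟩
      · exact Or.inl ⟨T, hTR.trans hRsub, hTcard, hTclq⟩
      · -- red clique of size b-1: add v
        have hvT : v ∉ T := fun h => (Finset.notMem_erase v S)
          ((Finset.filter_subset _ _) (hTR h))
        have hvW : v ∉ W := fun h => (Finset.notMem_erase v S)
          ((Finset.filter_subset _ _) (hWR h))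
        refine Or.inr ⟨insert v T, W, Finset.insert_subset hv (hTR.trans hRsub),
          hWR.trans hRsub, ?_, ?_, hWcard, ?_, ?_⟩
        · exact Finset.disjoint_insert_left.mpr ⟨hvW, hdisj⟩
        · rw [Finset.card_insert_of_notMem hvT, hTcard]; omega
        · intro x hx y hy hxy
          rcases Finset.mem_insert.mp hx with hx' | hx'
          · subst hx'
            rcases Finset.mem_insert.mp hy with hy' | hy'
            · exact absurd hy'.symm hxy
            · exact (Finset.mem_filter.mp (hTR hy')).2
          · rcases Finset.mem_insert.mp hy with hy' | hy'
            · subst hy'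
              exact fun hadj => (Finset.mem_filter.mp (hTR hx')).2 hadj.symm
            · exact hTred x hx' y hy' hxy
        · intro x hx y hy
          rcases Finset.mem_insert.mp hx with hx' | hx'
          · subst hx'
            exact (Finset.mem_filter.mp (hWR hy)).2
          · exact hTW x hx' y hy

open Finset in
/-- The Ramsey property for `K_p` vs `K_p + qK₁` holds at any `N ≥ 2^(2p)(q+1) - 1`. -/
lemma ramseyProp_join (p q N : ℕ) (hNcard : 2 ^ (p + p) * (q + 1) ≤ N + 1) :
    RamseyProp (SimpleGraph.completeGraph (Fin p))
      (SimpleGraph.join (SimpleGraph.completeGraph (Fin p)) (⊥ : SimpleGraph (Fin q))) N := by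
  classical
  intro blue
  have hcard : 2 ^ (p + p) * (q + 1) ≤ (Finset.univ : Finset (Fin N)).card + 1 := by
    rw [Finset.card_univ, Fintype.card_fin]
    exact hNcard
  rcases key_lemma blue q (p + p) p p rfl Finset.univ hcard with
    ⟨T, _, hTcard, hTclq⟩ | ⟨T, W, _, _, hdisj, hTcard, hWcard, hTred, hTW⟩
  · -- blue clique of size p
    left
    let e := T.orderIsoOfFin hTcard
    refine ⟨⟨fun i => (e i : Fin N), fun i j h => e.injective (Subtype.ext h)⟩, ?_⟩
    intro a b hab
    have hne : a ≠ b := hab.ne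
    have hne' : (e a : Fin N) ≠ (e b : Fin N) := fun h => hne (e.injective (Subtype.ext h))
    exact hTclq _ (e a).2 _ (e b).2 hne'
  · -- red clique of size p with q common red neighbors
    right
    obtain ⟨W', hW'W, hW'card⟩ := W.exists_subset_card_eq hWcard
    let eT := T.orderIsoOfFin hTcard
    let eW := W'.orderIsoOfFin hW'card
    have hinj : Function.Injective
        (Sum.elim (fun i : Fin p => (eT i : Fin N)) (fun j : Fin q => (eW j : Fin N))) := by
      rintro (i | i) (j | j) h
      · exact congrArg Sum.inl (eT.injective (Subtype.ext h))
      · exact absurd ((eT i).2) (by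
          simp only [Function.Embedding.coeFn_mk, Sum.elim_inl, Sum.elim_inr] at h
          rw [h]
          exact fun hm => (Finset.disjoint_left.mp hdisj) hm (hW'W (eW j).2))
      · exact absurd ((eT j).2) (by
          simp only [Function.Embedding.coeFn_mk, Sum.elim_inl, Sum.elim_inr] at h
          rw [← h]
          exact fun hm => (Finset.disjoint_left.mp hdisj) hm (hW'W (eW i).2))
      · exact congrArg Sum.inr (eW.injective (Subtype.ext h))
    refine ⟨⟨Sum.elim (fun i => (eT i : Fin N)) (fun j => (eW j : Fin N)), hinj⟩, ?_⟩
    rintro (a | a) (b | b) hab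
    · -- both in the clique part
      have hne : a ≠ b := by
        intro h; subst h
        exact (SimpleGraph.join _ _).loopless.irrefl _ hab
      have hne' : (eT a : Fin N) ≠ (eT b : Fin N) :=
        fun h => hne (eT.injective (Subtype.ext h))
      exact (blue.compl_adj _ _).mpr ⟨hne', hTred _ (eT a).2 _ (eT b).2 hne'⟩
    · -- clique to independent part
      refine (blue.compl_adj _ _).mpr ⟨?_, hTW _ (eT a).2 _ (hW'W (eW b).2)⟩
      intro h
      simp only [Function.Embedding.coeFn_mk, Sum.elim_inl, Sum.elim_inr] at h
      exact (Finset.disjoint_left.mp hdisj) (eT a).2 (by rw [h]; exact hW'W (eW b).2)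
    · -- independent to clique part
      refine (blue.compl_adj _ _).mpr ⟨?_, fun h =>
        hTW _ (eT b).2 _ (hW'W (eW a).2) h.symm⟩
      intro h
      simp only [Function.Embedding.coeFn_mk, Sum.elim_inl, Sum.elim_inr] at h
      exact (Finset.disjoint_left.mp hdisj) (eT b).2 (by rw [← h]; exact hW'W (eW a).2)
    · -- both in the independent part : no adjacency in ⊥
      exact absurd hab (by intro h; exact h)

/-- Corollary: Ramsey bound for `K_p` versus `K_{p,q}` and versus `K_p + qK₁`. -/
theorem ramsey_complete_vs_completeBipartite (p q : ℕ) (hp : 141 ≤ p) (hq0 : 0 < q)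
    (hq : (q : ℝ) ≤ 2 ^ (53 * (p : ℝ) / (27 * Real.logb 2 ((p : ℝ) / 27)))) :
    ramsey (SimpleGraph.completeGraph (Fin p)) (completeBipartiteGraph (Fin p) (Fin q)) ≤
      ramsey (SimpleGraph.completeGraph (Fin p))
        (SimpleGraph.join (SimpleGraph.completeGraph (Fin p)) (⊥ : SimpleGraph (Fin q))) ∧
    (ramsey (SimpleGraph.completeGraph (Fin p))
        (SimpleGraph.join (SimpleGraph.completeGraph (Fin p)) (⊥ : SimpleGraph (Fin q))) : ℝ) ≤
      2 ^ ((250 : ℝ) / 27 * p) := by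
  have hN : RamseyProp (SimpleGraph.completeGraph (Fin p))
      (SimpleGraph.join (SimpleGraph.completeGraph (Fin p)) (⊥ : SimpleGraph (Fin q)))
      (2 ^ (2 * p) * (q + 1)) := by
    apply ramseyProp_join
    rw [two_mul]
    exact Nat.le_succ _
  have hNpos : 0 < 2 ^ (2 * p) * (q + 1) := by positivity
  have hsJne : {N : ℕ | 0 < N ∧ RamseyProp (SimpleGraph.completeGraph (Fin p))
      (SimpleGraph.join (SimpleGraph.completeGraph (Fin p)) (⊥ : SimpleGraph (Fin q))) N}.Nonempty :=
    ⟨2 ^ (2 * p) * (q + 1), hNpos, hN⟩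
  have hmem : ramsey (SimpleGraph.completeGraph (Fin p))
      (SimpleGraph.join (SimpleGraph.completeGraph (Fin p)) (⊥ : SimpleGraph (Fin q))) ∈
      {N : ℕ | 0 < N ∧ RamseyProp (SimpleGraph.completeGraph (Fin p))
      (SimpleGraph.join (SimpleGraph.completeGraph (Fin p)) (⊥ : SimpleGraph (Fin q))) N} :=
    Nat.sInf_mem hsJne
  constructor
  · -- monotonicity: a copy of the join yields a copy of the complete bipartite graph
    apply Nat.sInf_le
    refine ⟨hmem.1, ?_⟩
    intro blue
    rcases hmem.2 blue with hblue | ⟨f, hf⟩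
    · exact Or.inl hblue
    · refine Or.inr ⟨f, ?_⟩
      rintro (a | a) (b | b) hab
      · simp at hab
      · exact hf (show (SimpleGraph.join (SimpleGraph.completeGraph (Fin p))
          (⊥ : SimpleGraph (Fin q))).Adj (Sum.inl a) (Sum.inr b) from trivial)
      · exact hf (show (SimpleGraph.join (SimpleGraph.completeGraph (Fin p))
          (⊥ : SimpleGraph (Fin q))).Adj (Sum.inr a) (Sum.inl b) from trivial)
      · simp at hab
  · -- numerical bound
    have hle : ramsey (SimpleGraph.completeGraph (Fin p))
        (SimpleGraph.join (SimpleGraph.completeGraph (Fin p)) (⊥ : SimpleGraph (Fin q))) ≤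
        2 ^ (2 * p) * (q + 1) := Nat.sInf_le ⟨hNpos, hN⟩
    have hp' : (141 : ℝ) ≤ (p : ℝ) := by exact_mod_cast hp
    have hq0' : (1 : ℝ) ≤ (q : ℝ) := by exact_mod_cast hq0
    have hL : (1 : ℝ) ≤ Real.logb 2 ((p : ℝ) / 27) := by
      have h2 : (2 : ℝ) ≤ (p : ℝ) / 27 := by linarith
      calc (1 : ℝ) = Real.logb 2 2 := (Real.logb_self_eq_one (by norm_num)).symm
        _ ≤ Real.logb 2 ((p : ℝ) / 27) :=
          (Real.logb_le_logb (by norm_num) (by norm_num) (by linarith)).mpr h2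
    have hexp : 53 * (p : ℝ) / (27 * Real.logb 2 ((p : ℝ) / 27)) ≤ 53 * (p : ℝ) / 27 :=
      div_le_div_of_nonneg_left (by linarith) (by norm_num) (by linarith)
    have hqbound : (q : ℝ) ≤ 2 ^ (53 * (p : ℝ) / 27) :=
      hq.trans (Real.rpow_le_rpow_of_exponent_le (by norm_num) hexp)
    calc (ramsey (SimpleGraph.completeGraph (Fin p))
          (SimpleGraph.join (SimpleGraph.completeGraph (Fin p)) (⊥ : SimpleGraph (Fin q))) : ℝ)
        ≤ ((2 ^ (2 * p) * (q + 1) : ℕ) : ℝ) := by exact_mod_cast hle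
      _ = 2 ^ ((2 * p : ℕ) : ℝ) * ((q : ℝ) + 1) := by
          rw [Real.rpow_natCast]
          push_cast
          ring
      _ ≤ 2 ^ ((2 * p : ℕ) : ℝ) * (2 * 2 ^ (53 * (p : ℝ) / 27)) := by
          have h2 : (0 : ℝ) ≤ 2 ^ ((2 * p : ℕ) : ℝ) := le_of_lt (Real.rpow_pos_of_pos two_pos _)
          have h1 : ((q : ℝ) + 1) ≤ 2 * 2 ^ (53 * (p : ℝ) / 27) := by
            have := hqbound
            linarith
          exact mul_le_mul_of_nonneg_left h1 h2
      _ = 2 ^ (((2 * p : ℕ) : ℝ) + 1 + 53 * (p : ℝ) / 27) := by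
          rw [Real.rpow_add two_pos, Real.rpow_add two_pos, Real.rpow_one]
          ring
      _ ≤ 2 ^ ((250 : ℝ) / 27 * p) := by
          apply Real.rpow_le_rpow_of_exponent_le (by norm_num)
          push_cast
          linarith
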